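/- arXiv:2101.02751 — 2 statements merged into one kernel-verified Lean document; each statement's English description precedes it below -/
import Mathlib

section
/- For every integer n ≥ 2, the diameter of the RNNI graph on n leaves equals (n−1)(n−2)/2; that is, d(T,R) ≤ (n−1)(n−2)/2 for all maximal chains T and R in the partition lattice of {1,...,n}, and there exists a pair of maximal chains T, R with d(T,R) = (n−1)(n−2)/2. -/
/-- A maximal chain in the partition lattice of `Fin n`: a sequence
`P 0 < P 1 < … < P (n-1)` of partitions (modeled as setoids, ordered by refinement),
starting at the discrete partition `⊥`, ending at the trivial partition `⊤`,
each step being a covering step (merging exactly two blocks).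
We index by `ℕ` and require the chain to be constantly `⊤` from index `n-1` on. -/
structure RChain (n : ℕ) where
  P : ℕ → Setoid (Fin n)
  first : P 0 = ⊥
  last : ∀ i, n - 1 ≤ i → P i = ⊤
  step : ∀ i, i < n - 1 → P i ⋖ P (i + 1)

/-- The RNNI graph on `n` leaves: vertices are maximal chains in the partition
lattice of `Fin n`, two chains being adjacent iff they differ in exactly one partition. -/
def RNNI (n : ℕ) : SimpleGraph (RChain n) where
  Adj T R := ∃! i : ℕ, T.P i ≠ R.P i
  symm := by
    constructor
    rintro T R ⟨i, hi, hu⟩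
    exact ⟨i, hi.symm, fun j hj => hu j hj.symm⟩
  loopless := by
    constructor
    rintro T ⟨i, hi, -⟩
    exact hi rfl

/-- `C` is a cluster of the chain `T` if it is a block (equivalence class)
of some partition of the chain. -/
def IsCluster {n : ℕ} (T : RChain n) (C : Set (Fin n)) : Prop :=
  ∃ i, C ∈ (T.P i).classes

/-- A chain is a caterpillar chain if any two of its non-singleton clusters are
comparable under inclusion. -/
def IsCaterpillar {n : ℕ} (T : RChain n) : Prop :=
  ∀ C D : Set (Fin n), IsCluster T C → IsCluster T D →
    ¬ C.Subsingleton → ¬ D.Subsingleton → (C ⊆ D ∨ D ⊆ C)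

/-- For a caterpillar chain `T`, `rk T a` is the least index `i` such that the
block of `a` in `P i` is not a singleton (necessarily `i ≥ 1`). -/
noncomputable def rk {n : ℕ} (T : RChain n) (a : Fin n) : ℕ :=
  sInf {i | ∃ b, b ≠ a ∧ T.P i a b}

/-- A DCT vertex: a maximal chain on the ground set `Fin (m+2)` (representing
`{1, …, m+2}`, with `a_i ↦ i - 1`) having the set `{1, …, n}` and each of the sets
`B_k = {n+1, …, n+1+k}`, `k = 1, …, m+1-n`, as clusters. -/
def IsDCT (n m : ℕ) (X : RChain (m + 2)) : Prop :=
  IsCluster X {x | x.val < n} ∧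
  ∀ k, 1 ≤ k → k ≤ m + 1 - n → IsCluster X {x | n ≤ x.val ∧ x.val ≤ n + k}

/-- The subgraph of the RNNI graph induced on the DCT vertices. -/
def DCTGraph (n m : ℕ) : SimpleGraph {Z : RChain (m + 2) // IsDCT n m Z} :=
  SimpleGraph.comap Subtype.val (RNNI (m + 2))

/-- A caterpillar DCT vertex: a DCT vertex whose non-singleton clusters contained in
`{1, …, n}` are pairwise comparable under inclusion. -/
def IsCatDCT (n m : ℕ) (X : RChain (m + 2)) : Prop :=
  IsDCT n m X ∧
  ∀ C D : Set (Fin (m + 2)), IsCluster X C → IsCluster X D →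
    C ⊆ {x | x.val < n} → D ⊆ {x | x.val < n} →
    ¬ C.Subsingleton → ¬ D.Subsingleton → (C ⊆ D ∨ D ⊆ C)

/-!
Upper bound: suppose `T` agrees with `R` up to level `k` and `R` merges `a` and `b` at level
`k + 1`. In `T` the blocks of `a` and `b` are merged at some level at most `n - 1`; since the
partition lattice is graded by the number of blocks, that merge can be pushed down one level
per move, so `n - 2 - k` moves make `T` agree with `R` up to level `k + 1`. Summing over `k`
gives `(n - 1)(n - 2)/2`.

Lower bound: deleting the last leaf sends a chain to a chain on one leaf fewer.
A move either changes the rank of the last leaf by one, and then becomes trivial after the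
deletion, or keeps it and becomes at most one move. Hence
`d(T, R) ≥ d(T', R') + |rk T - rk R|`. For the caterpillars adding the leaves in increasing and
in decreasing order the last leaf has rank `n - 1` and `1`, and deletion yields the same pair on
`n - 1` leaves, so induction gives `(n - 2) + (n - 2)(n - 3)/2`.
-/

namespace Setoid

variable {α : Type*} {s t u : Setoid α} {a b x y : α} {B : Set α}

def merge (s : Setoid α) (a b : α) : Setoid α where
  r x y := s x y ∨ (s x a ∧ s y b) ∨ (s x b ∧ s y a)
  iseqv := by
    refine ⟨fun x => Or.inl (s.refl x), fun h => ?_, fun h h' => ?_⟩ <;>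
      simp only [← Quotient.eq_iff_equiv] at * <;> grind

theorem merge_rel : s.merge a b x y ↔ s x y ∨ (s x a ∧ s y b) ∨ (s x b ∧ s y a) := Iff.rfl

theorem le_merge (s : Setoid α) (a b : α) : s ≤ s.merge a b :=
  le_def.2 Or.inl

theorem merge_rel_self (s : Setoid α) (a b : α) : s.merge a b a b :=
  Or.inr (Or.inl ⟨s.refl a, s.refl b⟩)

theorem merge_le (hst : s ≤ t) (hab : t a b) : s.merge a b ≤ t := by
  refine le_def.2 fun {x y} h => ?_
  rcases h with h | ⟨hxa, hyb⟩ | ⟨hxb, hya⟩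
  · exact le_def.1 hst h
  · exact t.trans (le_def.1 hst hxa) (t.trans hab (t.symm (le_def.1 hst hyb)))
  · exact t.trans (le_def.1 hst hxb) (t.trans (t.symm hab) (t.symm (le_def.1 hst hya)))

theorem merge_congr (ha : s a x) (hb : s b y) : s.merge a b = s.merge x y :=
  le_antisymm (merge_le (le_merge s x y) (Or.inr (Or.inl ⟨ha, hb⟩)))
    (merge_le (le_merge s a b) (Or.inr (Or.inl ⟨s.symm ha, s.symm hb⟩)))

theorem lt_merge (h : ¬ s a b) : s < s.merge a b :=
  (le_merge s a b).lt_of_ne fun he => h (he ▸ merge_rel_self s a b)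

theorem exists_rel_not_rel_of_lt (h : s < t) : ∃ x y, t x y ∧ ¬ s x y := by
  by_contra! hc
  exact h.not_ge (le_def.2 fun {x y} => hc x y)

theorem covBy_merge (h : ¬ s a b) : s ⋖ s.merge a b := by
  refine ⟨lt_merge h, fun u hsu hu => ?_⟩
  obtain ⟨x, y, hxy, hnxy⟩ := exists_rel_not_rel_of_lt hsu
  have hs : ∀ {x y}, s x y → u x y := le_def.1 hsu.le
  have hab : u a b := by
    rcases le_def.1 hu.le hxy with h' | ⟨hxa, hyb⟩ | ⟨hxb, hya⟩
    · exact absurd h' hnxy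
    · exact u.trans (u.symm (hs hxa)) (u.trans hxy (hs hyb))
    · exact u.symm (u.trans (u.symm (hs hxb)) (u.trans hxy (hs hya)))
  exact hu.not_ge (merge_le hsu.le hab)

theorem eq_merge_of_covBy (h : s ⋖ t) (hab : t a b) (hnab : ¬ s a b) : t = s.merge a b :=
  ((h.eq_or_eq (le_merge s a b) (merge_le h.le hab)).resolve_left (lt_merge hnab).ne').symm

theorem exists_eq_merge_of_covBy (h : s ⋖ t) : ∃ a b, ¬ s a b ∧ t = s.merge a b := by
  obtain ⟨a, b, hab, hnab⟩ := exists_rel_not_rel_of_lt h.lt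
  exact ⟨a, b, hnab, eq_merge_of_covBy h hab hnab⟩

section Finite

variable [Finite α]

theorem card_quotient_merge (h : ¬ s a b) :
    Nat.card (Quotient s) = Nat.card (Quotient (s.merge a b)) + 1 := by
  classical
  let f : {q : Quotient s // q ≠ ⟦b⟧} → Quotient (s.merge a b) :=
    fun q => Quotient.map id (fun _ _ => Or.inl) q.1
  have hf : f.Bijective := by
    constructor
    · rintro ⟨q, hq⟩ ⟨q', hq'⟩ hqq'
      induction q using Quotient.inductionOn
      induction q' using Quotient.inductionOn
      rcases Quotient.exact hqq' with hr | ⟨-, hr⟩ | ⟨hr, -⟩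
      · exact Subtype.ext (Quotient.sound hr)
      · exact absurd (Quotient.sound hr) hq'
      · exact absurd (Quotient.sound hr) hq
    · intro q
      induction q using Quotient.inductionOn with | h y => ?_
      by_cases hyb : s y b
      · refine ⟨⟨⟦a⟧, fun he => h (Quotient.exact he)⟩, Quotient.sound ?_⟩
        exact Or.inr (Or.inl ⟨s.refl a, hyb⟩)
      · exact ⟨⟨⟦y⟧, fun he => hyb (Quotient.exact he)⟩, rfl⟩
  rw [← Nat.card_congr (Equiv.optionSubtypeNe ⟦b⟧), Finite.card_option,
    Nat.card_congr (Equiv.ofBijective f hf)]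

theorem card_quotient_le_of_le (h : s ≤ t) : Nat.card (Quotient t) ≤ Nat.card (Quotient s) :=
  Nat.card_le_card_of_surjective _ (Quotient.map_surjective (f := id) (fun _ _ => le_def.1 h)
    Function.surjective_id)

theorem card_quotient_lt_of_lt (h : s < t) : Nat.card (Quotient t) < Nat.card (Quotient s) := by
  obtain ⟨x, y, hxy, hnxy⟩ := exists_rel_not_rel_of_lt h
  have := card_quotient_le_of_le (merge_le h.le hxy)
  have := card_quotient_merge hnxy
  omega

theorem card_quotient_of_covBy (h : s ⋖ t) :
    Nat.card (Quotient s) = Nat.card (Quotient t) + 1 := by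
  obtain ⟨a, b, hab, rfl⟩ := exists_eq_merge_of_covBy h
  exact card_quotient_merge hab

theorem covBy_of_le_of_card_quotient (hst : s ≤ t)
    (h : Nat.card (Quotient s) = Nat.card (Quotient t) + 1) : s ⋖ t := by
  refine ⟨hst.lt_of_ne fun he => by simp [he] at h, fun u hsu hut => ?_⟩
  have := card_quotient_lt_of_lt hsu
  have := card_quotient_lt_of_lt hut
  omega

theorem merge_covBy_of_covBy_covBy (hst : s ⋖ t) (htu : t ⋖ u) (hxy : u x y) (hnxy : ¬ t x y) :
    s.merge x y ⋖ u := by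
  have hsxy : ¬ s x y := fun h => hnxy (le_def.1 hst.le h)
  refine covBy_of_le_of_card_quotient (merge_le (hst.le.trans htu.le) hxy) ?_
  have := card_quotient_of_covBy hst
  have := card_quotient_of_covBy htu
  have := card_quotient_merge hsxy
  omega

end Finite

def Isolated (s : Setoid α) (a : α) : Prop := ∀ b, s a b → b = a

theorem isolated_bot (a : α) : (⊥ : Setoid α).Isolated a := fun _ h => h.symm

theorem not_isolated_top [Nontrivial α] (a : α) : ¬ (⊤ : Setoid α).Isolated a := fun h =>
  let ⟨b, hb⟩ := exists_ne a
  hb (h b trivial)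

theorem Isolated.anti (hst : s ≤ t) (ht : t.Isolated a) : s.Isolated a :=
  fun b h => ht b (le_def.1 hst h)

def ofBlock (B : Set α) : Setoid α where
  r x y := x = y ∨ (x ∈ B ∧ y ∈ B)
  iseqv := ⟨fun _ => Or.inl rfl, fun h => by grind, fun h h' => by grind⟩

theorem ofBlock_rel : ofBlock B x y ↔ x = y ∨ (x ∈ B ∧ y ∈ B) := Iff.rfl

theorem ofBlock_covBy_insert (ha : a ∉ B) (hb : b ∈ B) :
    ofBlock B ⋖ ofBlock (insert a B) := by
  have : ofBlock (insert a B) = (ofBlock B).merge a b := by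
    ext x y
    simp only [ofBlock_rel, merge_rel, Set.mem_insert_iff]
    grind
  rw [this]
  exact covBy_merge (by simp [ofBlock_rel]; grind)

section Fin

variable {m : ℕ} {s t : Setoid (Fin (m + 2))}

theorem comap_castSucc_bot : (⊥ : Setoid (Fin (m + 2))).comap Fin.castSucc = ⊥ := by
  ext x y
  exact Fin.castSucc_inj

theorem comap_castSucc_top : (⊤ : Setoid (Fin (m + 2))).comap Fin.castSucc = ⊤ := rfl

theorem comap_merge_castSucc (x y : Fin (m + 1)) :
    (s.merge x.castSucc y.castSucc).comap Fin.castSucc = (s.comap Fin.castSucc).merge x y :=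
  rfl

theorem comap_castSucc_covBy (h : s ⋖ t)
    (hz : t.Isolated (Fin.last _) ∨ ¬ s.Isolated (Fin.last _)) :
    s.comap Fin.castSucc ⋖ t.comap Fin.castSucc := by
  obtain ⟨a, b, hab, rfl⟩ := exists_eq_merge_of_covBy h
  have lift : ∀ c, (c ≠ Fin.last _ ∨ ¬ s.Isolated (Fin.last _)) →
      ∃ c' : Fin (m + 1), s c'.castSucc c := by
    intro c hc
    by_cases hcz : c = Fin.last _
    · have hs := hc.resolve_left (not_not.2 hcz)
      simp only [Isolated, not_forall] at hs
      obtain ⟨c', hc', hzc'⟩ := hs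
      obtain ⟨c'', rfl⟩ := Fin.exists_castSucc_eq.2 hzc'
      exact ⟨c'', hcz ▸ s.symm hc'⟩
    · exact ⟨c.castPred hcz, by simp⟩
  have hne : (s.merge a b).Isolated (Fin.last _) → a ≠ Fin.last _ ∧ b ≠ Fin.last _ := by
    intro ht
    constructor <;> rintro rfl
    · exact hab (ht b (merge_rel_self s _ b) ▸ s.refl _)
    · exact hab (ht a ((s.merge a _).symm (merge_rel_self s a _)) ▸ s.refl _)
  obtain ⟨a', ha'⟩ := lift a (hz.imp_left fun ht => (hne ht).1)
  obtain ⟨b', hb'⟩ := lift b (hz.imp_left fun ht => (hne ht).2)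
  rw [merge_congr (s.symm ha') (s.symm hb'), comap_merge_castSucc]
  exact covBy_merge fun h' => hab (s.trans (s.symm ha') (s.trans h' hb'))

theorem comap_castSucc_eq_of_covBy (h : s ⋖ t) (hs : s.Isolated (Fin.last _))
    (ht : ¬ t.Isolated (Fin.last _)) : t.comap Fin.castSucc = s.comap Fin.castSucc := by
  obtain ⟨a, b, -, rfl⟩ := exists_eq_merge_of_covBy h
  have hnz : ∀ x : Fin (m + 1), ¬ s x.castSucc (Fin.last _) := fun x hx =>
    Fin.castSucc_ne_last x (hs _ (s.symm hx))
  have hab : a = Fin.last _ ∨ b = Fin.last _ := by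
    simp only [Isolated, not_forall] at ht
    obtain ⟨c, hc, hcz⟩ := ht
    rcases hc with hc | ⟨hza, -⟩ | ⟨hzb, -⟩
    · exact absurd (hs c hc) hcz
    · exact Or.inl (hs a hza)
    · exact Or.inr (hs b hzb)
  ext x y
  simp only [comap_rel, merge_rel]
  rcases hab with rfl | rfl <;> simp [hnz]

end Fin

end Setoid

theorem Nat.succ_choose_two (m : ℕ) : (m + 1).choose 2 = m.choose 2 + m := by
  rw [Nat.choose_two_right, Nat.choose_two_right, Nat.triangle_succ]

namespace RChain

variable {n : ℕ}

@[ext]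
theorem ext {T R : RChain n} (h : T.P = R.P) : T = R := by
  cases T; cases R; cases h; rfl

theorem monotone (T : RChain n) : Monotone T.P := by
  refine monotone_nat_of_le_succ fun i => ?_
  rcases lt_or_ge i (n - 1) with h | h
  · exact (T.step i h).le
  · rw [T.last i h, T.last (i + 1) (by omega)]

theorem eq_of_forall_le {T R : RChain n} (h : ∀ j ≤ n - 1, T.P j = R.P j) : T = R := by
  ext1; funext j
  rcases le_or_gt j (n - 1) with hj | hj
  · exact h j hj
  · rw [T.last j hj.le, R.last j hj.le]

theorem exists_walk_length_le_one {T R : RChain n} {i : ℕ} (h : ∀ j ≠ i, T.P j = R.P j) :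
    ∃ W : (RNNI n).Walk T R, W.length ≤ 1 := by
  by_cases hi : T.P i = R.P i
  · obtain rfl : T = R := by
      ext1; funext j
      by_cases hj : j = i
      · exact hj ▸ hi
      · exact h j hj
    exact ⟨.nil, zero_le_one⟩
  · have hadj : (RNNI n).Adj T R := ⟨i, hi, fun j hj => by_contra fun hji => hj (h j hji)⟩
    exact ⟨hadj.toWalk, hadj.length_toWalk.le⟩

def update (T : RChain n) (i : ℕ) (s : Setoid (Fin n)) (hi : i + 1 < n - 1)
    (h₁ : T.P i ⋖ s) (h₂ : s ⋖ T.P (i + 2)) : RChain n where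
  P := Function.update T.P (i + 1) s
  first := by rw [Function.update_of_ne (by omega), T.first]
  last j hj := by rw [Function.update_of_ne (by omega), T.last j hj]
  step j hj := by
    rcases eq_or_ne j i with rfl | hji
    · simpa [Function.update_of_ne] using h₁
    rcases eq_or_ne j (i + 1) with rfl | hji'
    · simpa using h₂
    · rw [Function.update_of_ne hji', Function.update_of_ne (by omega)]
      exact T.step j hj

theorem update_P_self (T : RChain n) (i : ℕ) (s : Setoid (Fin n)) (hi : i + 1 < n - 1)
    (h₁ : T.P i ⋖ s) (h₂ : s ⋖ T.P (i + 2)) : (T.update i s hi h₁ h₂).P (i + 1) = s :=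
  Function.update_self _ _ _

theorem update_P_of_ne (T : RChain n) (i : ℕ) (s : Setoid (Fin n)) (hi : i + 1 < n - 1)
    (h₁ : T.P i ⋖ s) (h₂ : s ⋖ T.P (i + 2)) {j : ℕ} (hj : j ≠ i + 1) :
    (T.update i s hi h₁ h₂).P j = T.P j :=
  Function.update_of_ne hj _ _

/-- Each move lowers by one the first level at which `a` and `b` share a block: the partition
just below that level is replaced by the merge of `a` and `b` in the partition beneath it. -/
theorem exists_walk_agree_succ (R : RChain n) {k : ℕ} {a b : Fin n} (hk : k < n - 1)
    (hab : R.P (k + 1) a b) (hnab : ¬ R.P k a b) (d : ℕ) (T : RChain n)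
    (hT : ∀ j ≤ k, T.P j = R.P j) (hd : T.P (k + 1 + d) a b) :
    ∃ (T' : RChain n) (W : (RNNI n).Walk T T'),
      W.length ≤ d ∧ ∀ j ≤ k + 1, T'.P j = R.P j := by
  induction d generalizing T with
  | zero =>
    refine ⟨T, .nil, le_rfl, fun j hj => ?_⟩
    rcases hj.lt_or_eq with hj | rfl
    · exact hT j (by omega)
    · have hTk : ¬ T.P k a b := hT k le_rfl ▸ hnab
      rw [Setoid.eq_merge_of_covBy (T.step k hk) hd hTk, hT k le_rfl,
        ← Setoid.eq_merge_of_covBy (R.step k hk) hab hnab]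
  | succ d ih =>
    by_cases hd' : T.P (k + 1 + d) a b
    · obtain ⟨T', W, hW, hT'⟩ := ih T hT hd'
      exact ⟨T', W, by omega, hT'⟩
    have hp : k + d + 1 < n - 1 := by
      by_contra! hp
      exact hd' (by rw [T.last _ (by omega)]; trivial)
    rw [show k + 1 + d = k + d + 1 by omega] at hd'
    rw [show k + 1 + (d + 1) = k + d + 2 by omega] at hd
    have h₁ : T.P (k + d) ⋖ (T.P (k + d)).merge a b :=
      Setoid.covBy_merge fun h => hd' ((T.step _ (by omega)).le h)
    have h₂ : (T.P (k + d)).merge a b ⋖ T.P (k + d + 2) :=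
      Setoid.merge_covBy_of_covBy_covBy (T.step _ (by omega)) (T.step _ hp) hd hd'
    set T₁ := T.update (k + d) _ hp h₁ h₂
    obtain ⟨W₁, hW₁⟩ : ∃ W : (RNNI n).Walk T T₁, W.length ≤ 1 :=
      exists_walk_length_le_one fun j hj => (update_P_of_ne _ _ _ _ _ _ hj).symm
    have hT₁ : ∀ j ≤ k, T₁.P j = R.P j := fun j hj =>
      (update_P_of_ne _ _ _ _ _ _ (by omega)).trans (hT j hj)
    have hd₁ : T₁.P (k + 1 + d) a b := by
      rw [show k + 1 + d = k + d + 1 by omega, update_P_self]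
      exact Setoid.merge_rel_self _ a b
    obtain ⟨T', W, hW, hT'⟩ := ih T₁ hT₁ hd₁
    exact ⟨T', W₁.append W, by rw [SimpleGraph.Walk.length_append]; omega, hT'⟩

theorem exists_walk_length_le_of_agree (R : RChain n) (m : ℕ) (hm : m ≤ n - 1) (T : RChain n)
    (hT : ∀ j ≤ n - 1 - m, T.P j = R.P j) :
    ∃ W : (RNNI n).Walk T R, W.length ≤ m.choose 2 := by
  induction m generalizing T with
  | zero =>
    obtain rfl : T = R := eq_of_forall_le hT
    exact ⟨.nil, le_rfl⟩
  | succ m ih =>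
    set k := n - 2 - m
    have hk : k < n - 1 := by omega
    obtain ⟨a, b, hab, hnab⟩ := Setoid.exists_rel_not_rel_of_lt (R.step k hk).lt
    obtain ⟨T', W₁, hW₁, hT'⟩ := exists_walk_agree_succ R hk hab hnab m T
      (fun j hj => hT j (by omega)) (by rw [T.last _ (by omega)]; trivial)
    obtain ⟨W₂, hW₂⟩ := ih (by omega) T' fun j hj => hT' j (by omega)
    refine ⟨W₁.append W₂, ?_⟩
    rw [SimpleGraph.Walk.length_append, Nat.succ_choose_two]
    omega

theorem exists_walk_length_le_choose_two (T R : RChain n) :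
    ∃ W : (RNNI n).Walk T R, W.length ≤ (n - 1).choose 2 :=
  exists_walk_length_le_of_agree R (n - 1) le_rfl T fun j hj => by
    rw [Nat.le_zero.1 (by omega : j ≤ 0), T.first, R.first]

def caterpillar (n : ℕ) : RChain n where
  P j := Setoid.ofBlock {x | x.val ≤ j}
  first := by ext x y; simp [Setoid.ofBlock_rel, Fin.ext_iff]; omega
  last i hi := by ext x y; simp [Setoid.ofBlock_rel]; omega
  step i hi := by
    convert Setoid.ofBlock_covBy_insert (a := (⟨i + 1, by omega⟩ : Fin n))
      (b := ⟨0, by omega⟩) (B := {x | x.val ≤ i}) (by simp) (by simp) using 2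
    ext x; simp [Fin.ext_iff]; omega

def revCaterpillar (n : ℕ) : RChain n where
  P j := Setoid.ofBlock {x | n - 1 - j ≤ x.val}
  first := by ext x y; simp [Setoid.ofBlock_rel, Fin.ext_iff]; omega
  last i hi := by ext x y; simp [Setoid.ofBlock_rel]; omega
  step i hi := by
    convert Setoid.ofBlock_covBy_insert (a := (⟨n - 2 - i, by omega⟩ : Fin n))
      (b := ⟨n - 1, by omega⟩) (B := {x | n - 1 - i ≤ x.val}) (by simp; omega)
      (by simp; omega) using 2
    ext x; simp [Fin.ext_iff]; omega

theorem caterpillar_P (n j : ℕ) : (caterpillar n).P j = Setoid.ofBlock {x | x.val ≤ j} := rfl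

theorem revCaterpillar_P (n j : ℕ) :
    (revCaterpillar n).P j = Setoid.ofBlock {x | n - 1 - j ≤ x.val} := rfl

section DropLast

variable {m : ℕ} {S S' : RChain (m + 2)} {a : Fin (m + 2)} {i j : ℕ}

theorem isolated_iff_lt_rk : (S.P j).Isolated a ↔ j < rk S a := by
  have hrk : rk S a = sInf {i | ¬ (S.P i).Isolated a} := by
    simp only [rk, Setoid.Isolated, not_forall, exists_prop, and_comm]
  rw [hrk]
  have hne : ∃ i, ¬ (S.P i).Isolated a :=
    ⟨m + 1, S.last (m + 1) le_rfl ▸ Setoid.not_isolated_top a⟩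
  refine ⟨fun h => lt_of_not_ge fun hj => ?_, fun h => not_not.1 (Nat.notMem_of_lt_sInf h)⟩
  exact Nat.sInf_mem hne (h.anti (S.monotone hj))

theorem rk_eq_of_isolated_iff {k : ℕ}
    (h : ∀ j, (S.P j).Isolated a ↔ j < k) : rk S a = k :=
  eq_of_forall_lt_iff fun j => isolated_iff_lt_rk.symm.trans (h j)

theorem one_le_rk (S : RChain (m + 2)) (a : Fin (m + 2)) : 1 ≤ rk S a :=
  isolated_iff_lt_rk.1 (S.first ▸ Setoid.isolated_bot a)

theorem rk_le (S : RChain (m + 2)) (a : Fin (m + 2)) : rk S a ≤ m + 1 :=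
  not_lt.1 fun h => Setoid.not_isolated_top a (S.last (m + 1) le_rfl ▸ isolated_iff_lt_rk.2 h)

theorem comap_P_succ_eq_of_succ_eq_rk (h : j + 1 = rk S (Fin.last _)) :
    (S.P (j + 1)).comap Fin.castSucc = (S.P j).comap Fin.castSucc :=
  Setoid.comap_castSucc_eq_of_covBy (S.step j (by have := rk_le S (Fin.last _); omega))
    (isolated_iff_lt_rk.2 (by omega)) (mt isolated_iff_lt_rk.1 (by omega))

theorem comap_P_covBy_of_succ_ne_rk (hj : j < m + 1) (h : j + 1 ≠ rk S (Fin.last _)) :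
    (S.P j).comap Fin.castSucc ⋖ (S.P (j + 1)).comap Fin.castSucc := by
  refine Setoid.comap_castSucc_covBy (S.step j hj) ?_
  rcases Nat.lt_or_ge (j + 1) (rk S (Fin.last _)) with hlt | hge
  · exact Or.inl (isolated_iff_lt_rk.2 hlt)
  · exact Or.inr (mt isolated_iff_lt_rk.1 (by omega))

/-- After restriction to the first `m + 1` leaves, the level at which the last leaf stops being
a singleton repeats the level below it, so it is skipped. -/
noncomputable def dropLast (S : RChain (m + 2)) : RChain (m + 1) where
  P j := (S.P (if j < rk S (Fin.last _) then j else j + 1)).comap Fin.castSucc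
  first := by
    rw [if_pos (Nat.lt_of_succ_le (one_le_rk S _)), S.first, Setoid.comap_castSucc_bot]
  last i hi := by
    have := rk_le S (Fin.last _)
    split_ifs with h
    · rw [← comap_P_succ_eq_of_succ_eq_rk (by omega), S.last _ (by omega),
        Setoid.comap_castSucc_top]
    · rw [S.last _ (by omega), Setoid.comap_castSucc_top]
  step i hi := by
    split_ifs with h₁ h₂ h₂
    · exact comap_P_covBy_of_succ_ne_rk (by omega) (by omega)
    · rw [← comap_P_succ_eq_of_succ_eq_rk (by omega)]
      exact comap_P_covBy_of_succ_ne_rk (by omega) (by omega)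
    · omega
    · exact comap_P_covBy_of_succ_ne_rk (by omega) (by omega)

theorem dropLast_P_of_lt (h : j < rk S (Fin.last _)) :
    S.dropLast.P j = (S.P j).comap Fin.castSucc := by
  simp only [dropLast, if_pos h]

theorem dropLast_P_of_ge (h : rk S (Fin.last _) ≤ j) :
    S.dropLast.P j = (S.P (j + 1)).comap Fin.castSucc := by
  simp only [dropLast, if_neg (not_lt.2 h)]

theorem dropLast_eq_of_rk_lt (hS : ∀ j ≠ i, S.P j = S'.P j)
    (hlt : rk S (Fin.last _) < rk S' (Fin.last _)) :
    S.dropLast = S'.dropLast ∧ rk S' (Fin.last _) = rk S (Fin.last _) + 1 := by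
  have hi : rk S (Fin.last _) = i := by
    by_contra hne
    exact (mt isolated_iff_lt_rk.1 (lt_irrefl _)) (hS _ hne ▸ isolated_iff_lt_rk.2 hlt)
  have hi' : rk S' (Fin.last _) = i + 1 := by
    refine le_antisymm (not_lt.1 fun h => ?_) (by omega)
    exact (mt isolated_iff_lt_rk.1 (by omega)) (hS (i + 1) (by omega) ▸ isolated_iff_lt_rk.2 h)
  refine ⟨?_, by omega⟩
  ext1; funext j
  rcases lt_trichotomy j i with hj | rfl | hj
  · rw [dropLast_P_of_lt (by omega), dropLast_P_of_lt (by omega), hS j (by omega)]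
  · rw [dropLast_P_of_ge (by omega), dropLast_P_of_lt (by omega), hS (j + 1) (by omega),
      comap_P_succ_eq_of_succ_eq_rk (by omega)]
  · rw [dropLast_P_of_ge (by omega), dropLast_P_of_ge (by omega), hS (j + 1) (by omega)]

/-- A move changes the rank of the last leaf by at most one, and when it does change it,
deleting the last leaf undoes the move. -/
theorem exists_walk_dropLast_of_adj (h : (RNNI (m + 2)).Adj S S') :
    ∃ W : (RNNI (m + 1)).Walk S.dropLast S'.dropLast,
      W.length + Nat.dist (rk S (Fin.last _)) (rk S' (Fin.last _)) ≤ 1 := by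
  obtain ⟨i, -, hi⟩ := h
  have hS : ∀ j ≠ i, S.P j = S'.P j := fun j hj => by_contra fun h => hj (hi j h)
  rcases lt_trichotomy (rk S (Fin.last _)) (rk S' (Fin.last _)) with hlt | heq | hgt
  · obtain ⟨hdrop, hrk⟩ := dropLast_eq_of_rk_lt hS hlt
    rw [hdrop, hrk]
    exact ⟨.nil, by simp [Nat.dist]⟩
  · simp only [heq, Nat.dist_self, add_zero]
    refine exists_walk_length_le_one (i := if i < rk S (Fin.last _) then i else i - 1)
      fun j hj => ?_
    rcases Nat.lt_or_ge j (rk S (Fin.last _)) with hjr | hjr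
    · rw [dropLast_P_of_lt hjr, dropLast_P_of_lt (heq ▸ hjr),
        hS j (by split_ifs at hj <;> omega)]
    · rw [dropLast_P_of_ge hjr, dropLast_P_of_ge (heq ▸ hjr),
        hS (j + 1) (by split_ifs at hj <;> omega)]
  · obtain ⟨hdrop, hrk⟩ := dropLast_eq_of_rk_lt (fun j hj => (hS j hj).symm) hgt
    rw [hdrop, hrk]
    exact ⟨.nil, by simp [Nat.dist]⟩

theorem exists_walk_dropLast (W : (RNNI (m + 2)).Walk S S') :
    ∃ W' : (RNNI (m + 1)).Walk S.dropLast S'.dropLast,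
      W'.length + Nat.dist (rk S (Fin.last _)) (rk S' (Fin.last _)) ≤ W.length := by
  induction W with
  | nil => exact ⟨.nil, by simp⟩
  | @cons S₁ S₂ S₃ h W ih =>
    obtain ⟨W₁, hW₁⟩ := exists_walk_dropLast_of_adj h
    obtain ⟨W₂, hW₂⟩ := ih
    have := Nat.dist.triangle_inequality (rk S₁ (Fin.last _)) (rk S₂ (Fin.last _))
      (rk S₃ (Fin.last _))
    refine ⟨W₁.append W₂, ?_⟩
    rw [SimpleGraph.Walk.length_append, SimpleGraph.Walk.length_cons]
    omega

theorem rk_caterpillar_last : rk (caterpillar (m + 2)) (Fin.last _) = m + 1 := by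
  refine rk_eq_of_isolated_iff fun j => ⟨fun h => ?_, fun hj b hb => ?_⟩
  · by_contra! hj
    have := h 0 (Or.inr ⟨by simp; omega, by simp⟩)
    simp [Fin.ext_iff] at this
  · rcases hb with rfl | ⟨hz, -⟩
    · rfl
    · simp only [Set.mem_ofPred_eq, Fin.val_last] at hz; omega

theorem rk_revCaterpillar_last : rk (revCaterpillar (m + 2)) (Fin.last _) = 1 := by
  refine rk_eq_of_isolated_iff fun j => ⟨fun h => ?_, fun hj b hb => ?_⟩
  · by_contra! hj
    have := h ⟨m, by omega⟩ (Or.inr ⟨by simp; omega, by simp; omega⟩)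
    simp [Fin.ext_iff] at this
  · rcases hb with rfl | ⟨-, hb⟩
    · rfl
    · ext; simp only [Set.mem_ofPred_eq] at hb; simp; omega

theorem dropLast_caterpillar : (caterpillar (m + 2)).dropLast = caterpillar (m + 1) := by
  ext1; funext j
  rcases Nat.lt_or_ge j (m + 1) with hj | hj
  · rw [dropLast_P_of_lt (by rw [rk_caterpillar_last]; omega)]
    refine Setoid.ext fun x y => ?_
    rw [Setoid.comap_rel, caterpillar_P, caterpillar_P, Setoid.ofBlock_rel, Setoid.ofBlock_rel]
    simp [Fin.ext_iff]
  · rw [dropLast_P_of_ge (by rw [rk_caterpillar_last]; omega), (caterpillar _).last _ (by omega),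
      (caterpillar _).last _ (by omega), Setoid.comap_castSucc_top]

theorem dropLast_revCaterpillar : (revCaterpillar (m + 2)).dropLast = revCaterpillar (m + 1) := by
  ext1; funext j
  rcases Nat.eq_zero_or_pos j with rfl | hj
  · rw [dropLast_P_of_lt (by rw [rk_revCaterpillar_last]; omega), (revCaterpillar _).first,
      (revCaterpillar _).first, Setoid.comap_castSucc_bot]
  · rw [dropLast_P_of_ge (by rw [rk_revCaterpillar_last]; omega)]
    refine Setoid.ext fun x y => ?_
    rw [Setoid.comap_rel, revCaterpillar_P, revCaterpillar_P, Setoid.ofBlock_rel,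
      Setoid.ofBlock_rel]
    simp [Fin.ext_iff]

theorem choose_le_length_walk_caterpillar (n : ℕ)
    (W : (RNNI n).Walk (caterpillar n) (revCaterpillar n)) : (n - 1).choose 2 ≤ W.length := by
  induction n with
  | zero => simp
  | succ n ih =>
    rcases n with _ | m
    · simp
    obtain ⟨W', hW'⟩ := exists_walk_dropLast W
    have hW'' := ih (W'.copy dropLast_caterpillar dropLast_revCaterpillar)
    have hdist : Nat.dist (m + 1) 1 = m := by simp [Nat.dist]
    rw [rk_caterpillar_last, rk_revCaterpillar_last, hdist] at hW'
    rw [SimpleGraph.Walk.length_copy, Nat.add_sub_cancel] at hW''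
    rw [Nat.add_sub_cancel, Nat.succ_choose_two]
    omega

end DropLast

end RChain

theorem rnni_diameter_general (n : ℕ) :
    (∀ T R : RChain n, (RNNI n).dist T R ≤ (n - 1) * (n - 2) / 2) ∧
    (∃ T R : RChain n, (RNNI n).dist T R = (n - 1) * (n - 2) / 2) := by
  rw [show n - 2 = n - 1 - 1 by omega, ← Nat.choose_two_right]
  have hupper (T R : RChain n) : (RNNI n).dist T R ≤ (n - 1).choose 2 :=
    let ⟨W, hW⟩ := RChain.exists_walk_length_le_choose_two T R
    (SimpleGraph.dist_le W).trans hW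
  obtain ⟨W, -⟩ := RChain.exists_walk_length_le_choose_two (.caterpillar n) (.revCaterpillar n)
  obtain ⟨W', hW'⟩ := W.reachable.exists_walk_length_eq_dist
  exact ⟨hupper, .caterpillar n, .revCaterpillar n,
    (hupper _ _).antisymm (hW' ▸ RChain.choose_le_length_walk_caterpillar n W')⟩

/-- The diameter of the RNNI graph on `n` leaves is `(n-1)(n-2)/2`. -/
theorem rnni_diameter (n : ℕ) (hn : 2 ≤ n) :
    (∀ T R : RChain n, (RNNI n).dist T R ≤ (n - 1) * (n - 2) / 2) ∧
    (∃ T R : RChain n, (RNNI n).dist T R = (n - 1) * (n - 2) / 2) :=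
  rnni_diameter_general n
end

section
/- For integers n ≥ 1 and m ≥ n−1, the number of functions c from {0,1,...,m} to the set of partitions of {1,...,n} such that c is monotone with respect to the refinement order, c(0) is the discrete partition, c(m) is the trivial partition, and for every 0 ≤ t < m either c(t+1) = c(t) or c(t+1) covers c(t) in the partition lattice (i.e., c(t+1) is obtained from c(t) by merging exactly two blocks), equals ((n−1)! · n! / 2^(n−1)) · C(m, n−1), where C(m, n−1) denotes the binomial coefficient. -/
/-!
Let `N(r, m)` count the sequences `c 0 = r, …, c m = ⊤` in which each step either stays put or
moves up along a covering relation (`⩿`). Splitting off the first step gives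
`N(r, m + 1) = N(r, m) + ∑_{r ⋖ s} N(s, m)`. In the lattice of equivalence relations,
`Setoid.correspondence` turns the covers of `r` into the atoms of `Setoid (Quotient r)`, and an
atom identifies exactly one pair of points; so if `r` has `k + 1` classes it has
`(k + 1).choose 2` covers, each with `k` classes. Induction on `m` with Pascal's rule then gives
`2 ^ k * N(r, m) = k! * (k + 1)! * m.choose k`; the coalescent trees are the
sequences counted by `N(⊥, m)`.
-/

namespace Setoid

variable {α : Type*}

instance [Finite α] : Finite (Setoid α) :=
  Finite.of_injective (fun s : Setoid α => ⇑s) fun _ _ => eq_iff_rel_eq.2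

def identify (z : Sym2 α) : Setoid α where
  r x y := x = y ∨ s(x, y) = z
  iseqv := by
    refine ⟨fun x => .inl rfl, ?_, ?_⟩
    · rintro x y (rfl | h)
      exacts [.inl rfl, .inr (Sym2.eq_swap.trans h)]
    · rintro x y w (rfl | hxy) (rfl | hyw)
      · exact .inl rfl
      · exact .inr hyw
      · exact .inr hxy
      · obtain ⟨hxy, hyw⟩ | ⟨hxw, -⟩ := Sym2.eq_iff.1 (hxy.trans hyw.symm)
        exacts [.inl (hxy.trans hyw), .inl hxw]

theorem identify_rel {z : Sym2 α} {x y : α} : identify z x y ↔ x = y ∨ s(x, y) = z :=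
  Iff.rfl

theorem identify_le_iff {t : Setoid α} {a b : α} : identify s(a, b) ≤ t ↔ t a b := by
  refine ⟨fun h => h (.inr rfl), fun hab x y => ?_⟩
  rintro (rfl | hxy)
  · exact t.refl x
  · obtain ⟨rfl, rfl⟩ | ⟨rfl, rfl⟩ := Sym2.eq_iff.1 hxy
    exacts [hab, t.symm hab]

theorem exists_rel_ne_of_ne_bot {t : Setoid α} (ht : t ≠ ⊥) : ∃ a b, a ≠ b ∧ t a b := by
  by_contra! h
  exact ht (Setoid.ext fun a b => ⟨fun hab => by_contra fun hne => h a b hne hab, by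
    rintro rfl; exact t.refl a⟩)

theorem isAtom_identify {z : Sym2 α} (hz : ¬ z.IsDiag) : IsAtom (identify z) := by
  induction z using Sym2.ind with | _ a b => ?_
  have hab : a ≠ b := by rwa [Sym2.mk_isDiag_iff] at hz
  refine ⟨fun h => hab ?_, fun t ht => by_contra fun htb => ?_⟩
  · exact (h ▸ identify_rel.2 (.inr rfl) : (⊥ : Setoid α) a b)
  · obtain ⟨x, y, hxy, htxy⟩ := exists_rel_ne_of_ne_bot htb
    have hz : s(x, y) = s(a, b) := (ht.le htxy).resolve_left hxy
    exact ht.not_ge (hz ▸ identify_le_iff.2 htxy)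

theorem isAtom_iff_exists_identify {t : Setoid α} :
    IsAtom t ↔ ∃ z : Sym2 α, ¬ z.IsDiag ∧ identify z = t := by
  refine ⟨fun ht => ?_, fun ⟨z, hz, h⟩ => h ▸ isAtom_identify hz⟩
  obtain ⟨a, b, hab, htab⟩ := exists_rel_ne_of_ne_bot ht.1
  refine ⟨s(a, b), Sym2.mk_isDiag_iff.not.2 hab, ?_⟩
  exact (ht.le_iff.1 (identify_le_iff.2 htab)).resolve_left
    (isAtom_identify (Sym2.mk_isDiag_iff.not.2 hab)).1

theorem eq_of_identify_eq {z z' : Sym2 α} (hz : ¬ z.IsDiag)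
    (h : identify z = identify z') : z = z' := by
  induction z using Sym2.ind with | _ a b => ?_
  have hab : identify z' a b := h ▸ identify_rel.2 (.inr rfl)
  exact hab.resolve_left (Sym2.mk_isDiag_iff.not.1 hz)

theorem card_isAtom [Finite α] :
    Nat.card {t : Setoid α // IsAtom t} = (Nat.card α).choose 2 := by
  classical
  have := Fintype.ofFinite α
  let e : {z : Sym2 α // ¬ z.IsDiag} → {t : Setoid α // IsAtom t} :=
    fun z => ⟨identify z, isAtom_identify z.2⟩
  have he : e.Bijective := by
    refine ⟨fun z z' h => Subtype.ext (eq_of_identify_eq z.2 ?_), fun t => ?_⟩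
    · exact congrArg Subtype.val h
    · obtain ⟨z, hz, h⟩ := isAtom_iff_exists_identify.1 t.2
      exact ⟨⟨z, hz⟩, Subtype.ext h⟩
  rw [← Nat.card_congr (Equiv.ofBijective e he), Nat.card_eq_fintype_card,
    Sym2.card_subtype_not_diag, Nat.card_eq_fintype_card]

theorem card_quotient_identify_add_one [Finite α] {a b : α} (hab : a ≠ b) :
    Nat.card (Quotient (identify s(a, b))) + 1 = Nat.card α := by
  classical
  let e : {x // x ≠ b} → Quotient (identify s(a, b)) := fun x => Quotient.mk _ x
  have he : e.Bijective := by
    refine ⟨fun x y h => Subtype.ext ?_, fun q => ?_⟩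
    · refine (Quotient.exact h).resolve_right fun hxy => ?_
      obtain ⟨-, h⟩ | ⟨h, -⟩ := Sym2.eq_iff.1 hxy
      exacts [y.2 h, x.2 h]
    · induction q using Quotient.ind with | _ x => ?_
      by_cases hx : x = b
      · subst hx
        exact ⟨⟨a, hab⟩, Quotient.sound (.inr rfl)⟩
      · exact ⟨⟨x, hx⟩, rfl⟩
  rw [← Nat.card_congr (Equiv.ofBijective e he), ← Finite.card_option,
    Nat.card_congr (Equiv.optionSubtypeNe b)]

theorem card_quotient_add_one_of_isAtom [Finite α] {t : Setoid α} (ht : IsAtom t) :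
    Nat.card (Quotient t) + 1 = Nat.card α := by
  obtain ⟨z, hz, rfl⟩ := isAtom_iff_exists_identify.1 ht
  induction z using Sym2.ind with
  | _ a b => exact card_quotient_identify_add_one (Sym2.mk_isDiag_iff.not.1 hz)

theorem card_quotient_le_one_iff [Finite α] {r : Setoid α} :
    Nat.card (Quotient r) ≤ 1 ↔ r = ⊤ :=
  Finite.card_le_one_iff_subsingleton.trans Quotient.subsingleton_iff

theorem covBy_iff_isAtom_correspondence {r s : Setoid α} (h : r ≤ s) :
    r ⋖ s ↔ IsAtom (correspondence r ⟨s, h⟩) := by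
  rw [covBy_iff_atom_Ici h]
  exact ((correspondence r : Set.Ici r ≃o _).isAtom_iff ⟨s, h⟩).symm

theorem card_quotient_correspondence {r s : Setoid α} (h : r ≤ s) :
    Nat.card (Quotient (correspondence r ⟨s, h⟩)) = Nat.card (Quotient s) := by
  have : correspondence r ⟨s, h⟩ = ker (Quot.mapRight h) := by
    ext x y
    induction x, y using Quotient.inductionOn₂
    exact (Quotient.eq (r := s)).symm
  rw [this]
  exact Nat.card_congr (quotientQuotientEquivQuotient r s h)

theorem card_quotient_add_one_of_covBy [Finite α] {r s : Setoid α} (h : r ⋖ s) :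
    Nat.card (Quotient s) + 1 = Nat.card (Quotient r) := by
  rw [← card_quotient_correspondence h.le]
  exact card_quotient_add_one_of_isAtom ((covBy_iff_isAtom_correspondence h.le).1 h)

theorem card_covBy [Finite α] (r : Setoid α) :
    Nat.card {s : Setoid α // r ⋖ s} = (Nat.card (Quotient r)).choose 2 := by
  rw [← card_isAtom]
  exact Nat.card_congr ((Equiv.subtypeSubtypeEquivSubtype CovBy.le).symm.trans
    ((correspondence r).toEquiv.subtypeEquiv fun s => covBy_iff_isAtom_correspondence s.2))

end Setoid

section WCovPaths

variable {P : Type*} [PartialOrder P] [OrderTop P]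

def wcovPaths (r : P) (m : ℕ) : Set (Fin (m + 1) → P) :=
  {c | c 0 = r ∧ c (Fin.last m) = ⊤ ∧ ∀ t : Fin m, c t.castSucc ⩿ c t.succ}

def wcovPathsSuccEquiv (r : P) (m : ℕ) :
    wcovPaths r (m + 1) ≃ Σ s : {s // r ⩿ s}, wcovPaths s.1 m where
  toFun c := ⟨⟨c.1 1, by simpa [c.2.1] using c.2.2.2 0⟩, Fin.tail c.1, rfl,
    by rw [Fin.tail, Fin.succ_last]; exact c.2.2.1,
    fun t => by simpa only [Fin.tail, Fin.succ_castSucc] using c.2.2.2 t.succ⟩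
  invFun d := ⟨Fin.cons r d.2.1, rfl, by simpa [← Fin.succ_last] using d.2.2.2.1,
    Fin.cases (by simp [d.2.2.1, d.1.2])
      fun t => by simpa only [Fin.castSucc_succ, Fin.cons_succ] using d.2.2.2.2 t⟩
  left_inv c := Subtype.ext (by simp [← c.2.1])
  right_inv d := by
    obtain ⟨⟨s, hs⟩, d, hd⟩ := d
    obtain rfl : s = d 0 := hd.1.symm
    rfl

theorem wcovPaths_eq (r : P) (m : ℕ) :
    wcovPaths r m = {c | Monotone c ∧ c 0 = r ∧ c (Fin.last m) = ⊤ ∧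
      ∀ t : Fin m, c t.castSucc = c t.succ ∨ c t.castSucc ⋖ c t.succ} := by
  ext c
  simp only [wcovPaths, Set.mem_ofPred_eq, ← wcovBy_iff_eq_or_covBy]
  exact ⟨fun ⟨h0, hl, hs⟩ => ⟨Fin.monotone_iff_le_succ.2 fun t => (hs t).le, h0, hl, hs⟩,
    fun h => h.2⟩

theorem card_wcovPaths_top_zero : Nat.card (wcovPaths (⊤ : P) 0) = 1 := by
  refine Nat.card_eq_one_iff_unique.2 ⟨⟨fun c d => Subtype.ext ?_⟩, ⟨fun _ => ⊤, rfl, rfl, nofun⟩⟩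
  funext t
  rw [Fin.fin_one_eq_zero t, c.2.1, d.2.1]

theorem card_wcovPaths_zero_of_ne_top {r : P} (hr : r ≠ ⊤) : Nat.card (wcovPaths r 0) = 0 :=
  Nat.card_eq_zero.2 (.inl ⟨fun c => hr (c.2.1.symm.trans c.2.2.1)⟩)

theorem card_wcovPaths_succ [Finite P] (r : P) (m : ℕ) :
    Nat.card (wcovPaths r (m + 1)) =
      Nat.card (wcovPaths r m) + Nat.card (Σ s : {s // r ⋖ s}, wcovPaths s.1 m) := by
  classical
  have := Fintype.ofFinite P
  have hsplit : Finset.univ.filter (r ⩿ ·) = insert r (Finset.univ.filter (r ⋖ ·)) := by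
    ext s
    simp [wcovBy_iff_eq_or_covBy, eq_comm]
  rw [Nat.card_congr (wcovPathsSuccEquiv r m), Nat.card_sigma, Nat.card_sigma,
    ← Finset.sum_subtype _ (p := (r ⩿ ·)) (fun _ => Finset.mem_filter_univ _)
      (fun s => Nat.card (wcovPaths s m)),
    ← Finset.sum_subtype _ (p := (r ⋖ ·)) (fun _ => Finset.mem_filter_univ _)
      (fun s => Nat.card (wcovPaths s m)), hsplit,
    Finset.sum_insert (by simp)]

end WCovPaths

namespace Setoid

variable {α : Type*}

open Nat in
theorem two_pow_mul_card_wcovPaths [Finite α] (m k : ℕ) (r : Setoid α)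
    (hr : Nat.card (Quotient r) = k + 1) :
    2 ^ k * Nat.card (wcovPaths r m) = k ! * (k + 1)! * m.choose k := by
  induction m generalizing k r with
  | zero =>
    rcases k with _ | k
    · rw [card_quotient_le_one_iff.1 hr.le, card_wcovPaths_top_zero]
      rfl
    · rw [card_wcovPaths_zero_of_ne_top fun h => by
        have := card_quotient_le_one_iff.2 h; omega, Nat.choose_zero_succ, mul_zero, mul_zero]
  | succ m ih =>
    rw [card_wcovPaths_succ]
    rcases k with _ | k
    · obtain rfl : r = ⊤ := card_quotient_le_one_iff.1 hr.le
      have hnone : Nat.card (Σ s : {s : Setoid α // ⊤ ⋖ s}, wcovPaths s.1 m) = 0 :=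
        Nat.card_eq_zero.2 (.inl ⟨fun x => not_top_lt x.1.2.lt⟩)
      simpa [hnone] using ih 0 ⊤ hr
    · classical
      have := Fintype.ofFinite {s // r ⋖ s}
      have hchoose : (k + 2).choose 2 * 2 = (k + 2) * (k + 1) := by
        simpa using (Nat.add_one_mul_choose_eq (k + 1) 1).symm
      have hcov : 2 ^ (k + 1) * Nat.card (Σ s : {s // r ⋖ s}, wcovPaths s.1 m) =
          (k + 2) * (k + 1) * (k ! * (k + 1)! * m.choose k) := by
        have hterm (s : {s // r ⋖ s}) : 2 ^ (k + 1) * Nat.card (wcovPaths s.1 m) =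
            2 * (k ! * (k + 1)! * m.choose k) := by
          rw [_root_.pow_succ', mul_assoc,
            ih k s.1 (by have := card_quotient_add_one_of_covBy s.2; omega)]
        rw [Nat.card_sigma, Finset.mul_sum, Finset.sum_congr rfl fun s _ => hterm s,
          Finset.sum_const, Finset.card_univ, ← Nat.card_eq_fintype_card, card_covBy, hr,
          smul_eq_mul, ← hchoose]
        ring
      rw [mul_add, hcov, ih (k + 1) r hr, Nat.choose_succ_succ', factorial_succ (k + 1),
        factorial_succ k]
      ring

end Setoid

open Nat in
theorem Nat.two_pow_dvd_factorial_mul_factorial_succ (k : ℕ) : 2 ^ k ∣ k ! * (k + 1)! := by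
  induction k with
  | zero => simp
  | succ k ih =>
    have h : (k + 1)! * (k + 2)! = k ! * (k + 1)! * ((k + 1) * (k + 2)) := by
      rw [factorial_succ (k + 1), factorial_succ k]
      ring
    rw [h, _root_.pow_succ]
    exact mul_dvd_mul ih (Nat.even_mul_succ_self _).two_dvd

theorem count_discrete_coalescent_trees_general (n m : ℕ) (hn : 1 ≤ n) :
    Nat.card {c : Fin (m + 1) → Setoid (Fin n) //
      Monotone c ∧ c 0 = ⊥ ∧ c (Fin.last m) = ⊤ ∧
      ∀ t : Fin m, c t.castSucc = c t.succ ∨ c t.castSucc ⋖ c t.succ} =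
    (Nat.factorial (n - 1) * Nat.factorial n / 2 ^ (n - 1)) * Nat.choose m (n - 1) := by
  have hbot : Nat.card (Quotient (⊥ : Setoid (Fin n))) = n - 1 + 1 := by
    rw [Nat.card_congr Setoid.quotientBotEquiv, Nat.card_fin]
    omega
  have hcount := Setoid.two_pow_mul_card_wcovPaths m (n - 1) ⊥ hbot
  have hdvd := Nat.two_pow_dvd_factorial_mul_factorial_succ (n - 1)
  rw [wcovPaths_eq, Nat.sub_add_cancel hn] at hcount
  rw [Nat.sub_add_cancel hn] at hdvd
  rw [Nat.div_mul_right_comm hdvd, ← hcount, Nat.mul_div_cancel_left _ (by positivity)]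
  rfl

/-- The number of discrete coalescent trees on `n` leaves with integer node times
bounded by `m`, encoded as monotone partition-valued functions on `{0,…,m}` going
from the discrete to the trivial partition by covering steps, is
`((n-1)! ⬝ n! / 2^(n-1)) ⬝ C(m, n-1)`. -/
theorem count_discrete_coalescent_trees (n m : ℕ) (hn : 1 ≤ n) (hm : n - 1 ≤ m) :
    Nat.card {c : Fin (m + 1) → Setoid (Fin n) //
      Monotone c ∧ c 0 = ⊥ ∧ c (Fin.last m) = ⊤ ∧
      ∀ t : Fin m, c t.castSucc = c t.succ ∨ c t.castSucc ⋖ c t.succ} =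
    (Nat.factorial (n - 1) * Nat.factorial n / 2 ^ (n - 1)) * Nat.choose m (n - 1) :=
  count_discrete_coalescent_trees_general n m hn
end
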